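/- arXiv:2110.12966 — 4 statements merged into one kernel-verified Lean document; each statement's English description precedes it below -/
import Mathlib

section
/- Let p ≥ 1 and 1 ≤ s ≤ p be natural numbers, and let v ∈ ℝ^p satisfy ‖v‖ = √p (Euclidean norm). If θ ∈ ℝ^p has at most s nonzero coordinates, then ‖θ − (1/p)⟨v,θ⟩ v‖² ≥ ‖θ‖² · (p − M(v,s))/p, where M(v,s) := max over subsets S ⊆ {1,…,p} with |S| ≤ s of ‖v_S‖², and v_S ∈ ℝ^p denotes the vector whose i-th coordinate equals v_i for i ∈ S and 0 otherwise. -/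
/-!
Expanding the square gives `‖θ - (⟨v,θ⟩/‖v‖²) v‖² = ‖θ‖² - ⟨v,θ⟩²/‖v‖²`. Since `θ` is supported on a
set `S` with `|S| ≤ s`, Cauchy–Schwarz on `S` gives `⟨v,θ⟩² ≤ ‖v_S‖² ‖θ‖² ≤ M(v,s) ‖θ‖²`.
-/

open Finset
open scoped Classical

noncomputable section

/-- `M v s` = maximum of `‖v_S‖²` over subsets `S` with `|S| ≤ s`. -/
def maxSubNormSq {p : ℕ} (v : Fin p → ℝ) (s : ℕ) : ℝ :=
  ⨆ S : {S : Finset (Fin p) // S.card ≤ s}, ∑ i ∈ S.1, v i ^ 2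

/-- The value `1 / 0 = 0` makes this hold also for `v = 0`. -/
theorem sum_sq_sub_proj_eq {ι : Type*} [Fintype ι] (v θ : ι → ℝ) :
    ∑ i, (θ i - (1 / ∑ j, v j ^ 2) * (∑ j, v j * θ j) * v i) ^ 2 =
      ∑ i, θ i ^ 2 - (∑ j, v j * θ j) ^ 2 / ∑ j, v j ^ 2 := by
  set a := ∑ j, v j ^ 2
  set T := ∑ j, v j * θ j
  have hexpand : ∀ i, (θ i - (1 / a) * T * v i) ^ 2 =
      θ i ^ 2 - 2 * (T / a) * (v i * θ i) + (T / a) ^ 2 * v i ^ 2 := fun i => by ring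
  simp only [hexpand, sum_add_distrib, sum_sub_distrib, ← mul_sum]
  rcases eq_or_ne a 0 with ha | ha
  · simp [ha]
  · field_simp
    ring

theorem sum_sq_le_maxSubNormSq {p : ℕ} (v : Fin p → ℝ) {s : ℕ} {S : Finset (Fin p)}
    (hS : S.card ≤ s) : ∑ i ∈ S, v i ^ 2 ≤ maxSubNormSq v s :=
  le_ciSup (f := fun S : {S : Finset (Fin p) // S.card ≤ s} => ∑ i ∈ S.1, v i ^ 2)
    (Set.finite_range _).bddAbove ⟨S, hS⟩

theorem sq_sum_mul_le_maxSubNormSq_mul {p s : ℕ} (v θ : Fin p → ℝ)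
    (hθ : Set.ncard {i | θ i ≠ 0} ≤ s) :
    (∑ j, v j * θ j) ^ 2 ≤ maxSubNormSq v s * ∑ j, θ j ^ 2 := by
  set S := univ.filter (fun i => θ i ≠ 0)
  have hcard : S.card ≤ s := by
    rw [← Set.ncard_coe_finset, coe_filter]
    simpa only [mem_univ, true_and] using hθ
  have hrestrict : ∀ f : Fin p → ℝ, (∀ i, θ i = 0 → f i = 0) → ∑ i ∈ S, f i = ∑ i, f i :=
    fun f hf => sum_filter_of_ne fun i _ hfi => fun hθi => hfi (hf i hθi)
  calc (∑ j, v j * θ j) ^ 2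
      = (∑ j ∈ S, v j * θ j) ^ 2 := by rw [hrestrict _ fun i hi => by simp [hi]]
    _ ≤ (∑ j ∈ S, v j ^ 2) * ∑ j ∈ S, θ j ^ 2 := sum_mul_sq_le_sq_mul_sq S v θ
    _ ≤ maxSubNormSq v s * ∑ j, θ j ^ 2 := by
      rw [hrestrict (fun j => θ j ^ 2) fun i hi => by simp [hi]]
      exact mul_le_mul_of_nonneg_right (sum_sq_le_maxSubNormSq v hcard)
        (sum_nonneg fun i _ => sq_nonneg _)

theorem sparse_orthogonal_projection_bound_general
    (p s : ℕ) (hp : 1 ≤ p)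
    (v : Fin p → ℝ) (hv : Real.sqrt (∑ i, v i ^ 2) = Real.sqrt p)
    (θ : Fin p → ℝ) (hθ : Set.ncard {i | θ i ≠ 0} ≤ s) :
    (∑ i, θ i ^ 2) * (((p : ℝ) - maxSubNormSq v s) / p) ≤
      ∑ i, (θ i - (1 / (p : ℝ)) * (∑ j, v j * θ j) * v i) ^ 2 := by
  have hp0 : (0 : ℝ) < p := by exact_mod_cast hp
  have hvsq : ∑ i, v i ^ 2 = p :=
    (Real.sqrt_inj (sum_nonneg fun i _ => sq_nonneg _) hp0.le).mp hv
  have hproj := sum_sq_sub_proj_eq v θ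
  rw [hvsq] at hproj
  rw [hproj, mul_div_assoc', mul_sub, sub_div, mul_div_cancel_right₀ _ hp0.ne']
  gcongr
  linarith [sq_sum_mul_le_maxSubNormSq_mul v θ hθ]

theorem sparse_orthogonal_projection_bound
    (p s : ℕ) (hp : 1 ≤ p) (hs1 : 1 ≤ s) (hs2 : s ≤ p)
    (v : Fin p → ℝ) (hv : Real.sqrt (∑ i, v i ^ 2) = Real.sqrt p)
    (θ : Fin p → ℝ) (hθ : Set.ncard {i | θ i ≠ 0} ≤ s) :
    (∑ i, θ i ^ 2) * (((p : ℝ) - maxSubNormSq v s) / p) ≤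
      ∑ i, (θ i - (1 / (p : ℝ)) * (∑ j, v j * θ j) * v i) ^ 2 :=
  sparse_orthogonal_projection_bound_general p s hp v hv θ hθ
end
end

section
/- Let p ≥ 1 and 1 ≤ s ≤ p be natural numbers, and let v ∈ ℝ^p satisfy ‖v‖ = √p. If θ ∈ ℝ^p has at most s nonzero coordinates, then ‖θ − (1/p)⟨v,θ⟩ v_{supp(θ)}‖² ≥ ‖θ‖² · (p − 2M(v,s))/p, where supp(θ) := {i : θ_i ≠ 0}, v_{supp(θ)} ∈ ℝ^p is the vector agreeing with v on supp(θ) and equal to 0 elsewhere, and M(v,s) := max over subsets S ⊆ {1,…,p} with |S| ≤ s of ‖v_S‖², with v_S the vector agreeing with v on S and 0 elsewhere. -/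
open Finset
open scoped Classical

noncomputable section

theorem sparse_support_projection_bound
    (p s : ℕ) (hp : 1 ≤ p) (hs1 : 1 ≤ s) (hs2 : s ≤ p)
    (v : Fin p → ℝ) (hv : Real.sqrt (∑ i, v i ^ 2) = Real.sqrt p)
    (θ : Fin p → ℝ) (hθ : Set.ncard {i | θ i ≠ 0} ≤ s) :
    (∑ i, θ i ^ 2) * (((p : ℝ) - 2 * maxSubNormSq v s) / p) ≤
      ∑ i, (θ i - (1 / (p : ℝ)) * (∑ j, v j * θ j) *
        (if θ i ≠ 0 then v i else 0)) ^ 2 := by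
  set w : Fin p → ℝ := fun i => if θ i ≠ 0 then v i else 0 with hw
  set T : Finset (Fin p) := Finset.univ.filter (fun i => θ i ≠ 0) with hTdef
  have hTset : {i | θ i ≠ 0} = (T : Set (Fin p)) := by
    ext i; simp [hTdef]
  have hT : T.card ≤ s := by
    rw [hTset, Set.ncard_coe_finset] at hθ; exact hθ
  set A := ∑ i, θ i ^ 2 with hA
  set I := ∑ j, v j * θ j with hI
  set W := ∑ i, w i ^ 2 with hWdef
  set M := maxSubNormSq v s with hM
  have hq : (0 : ℝ) < p := by positivity
  -- W equals the sum over T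
  have hWT : W = ∑ i ∈ T, v i ^ 2 := by
    rw [hWdef, ← Finset.sum_filter_of_ne (p := fun i => θ i ≠ 0)
      (by intro i _ h; by_contra hc; simp [hw, hc] at h)]
    apply Finset.sum_congr rfl
    intro i hi
    simp only [hTdef, Finset.mem_filter] at hi
    simp [hw, hi.2]
  -- bound W ≤ M
  have hbdd : BddAbove (Set.range fun S : {S : Finset (Fin p) // S.card ≤ s} =>
      ∑ i ∈ S.1, v i ^ 2) := by
    refine ⟨∑ i, v i ^ 2, ?_⟩
    rintro x ⟨S, rfl⟩
    exact Finset.sum_le_sum_of_subset_of_nonneg (Finset.subset_univ _)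
      (fun i _ _ => sq_nonneg _)
  have hWM : W ≤ M := by
    rw [hWT]
    exact le_ciSup hbdd ⟨T, hT⟩
  -- I = ∑ w i * θ i
  have hIw : I = ∑ i, w i * θ i := by
    apply Finset.sum_congr rfl
    intro i _
    by_cases h : θ i = 0 <;> simp [hw, h]
  -- Cauchy-Schwarz
  have hCS : I ^ 2 ≤ W * A := by
    rw [hIw, hWdef, hA]
    exact Finset.sum_mul_sq_le_sq_mul_sq Finset.univ w θ
  have hAnn : 0 ≤ A := Finset.sum_nonneg fun i _ => sq_nonneg _
  have hWnn : 0 ≤ W := Finset.sum_nonneg fun i _ => sq_nonneg _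
  -- expand the RHS
  have expand : ∑ i, (θ i - (1 / (p : ℝ)) * I * w i) ^ 2 =
      A - 2 * ((1 / (p : ℝ)) * I) * (∑ i, w i * θ i)
        + ((1 / (p : ℝ)) * I) ^ 2 * W := by
    have h : ∀ i, (θ i - (1 / (p : ℝ)) * I * w i) ^ 2 =
        θ i ^ 2 - 2 * ((1 / (p : ℝ)) * I) * (w i * θ i)
          + ((1 / (p : ℝ)) * I) ^ 2 * w i ^ 2 := fun i => by ring
    simp_rw [h, Finset.sum_add_distrib, Finset.sum_sub_distrib,
      ← Finset.mul_sum]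
    rfl
  rw [expand, ← hIw]
  rw [div_eq_mul_inv, one_div]
  have hq2 : (0 : ℝ) < ((p : ℝ))⁻¹ := by positivity
  have h1 : I ^ 2 ≤ M * A := hCS.trans (mul_le_mul_of_nonneg_right hWM hAnn)
  nlinarith [mul_le_mul_of_nonneg_left h1 hq2.le,
    mul_nonneg (mul_nonneg hq2.le hq2.le) (mul_nonneg (sq_nonneg I) hWnn),
    mul_inv_cancel₀ hq.ne', hAnn]
end
end

section
/- Let p, R, s ≥ 1 be natural numbers with R dividing p and 1 ≤ s ≤ p, let B_1,…,B_R be pairwise disjoint subsets of {1,…,p}, each of size p/R, whose union is {1,…,p}, and let ε > 0. Then Θ(p,s,ε) ⊆ Υ_I(p,s,ε) ∪ Υ_II(p,s,ε), where Θ(p,s,ε) := {θ ∈ ℝ^p : ‖θ‖ ≥ ε and ‖θ‖₀ ≤ s}, Υ_I(p,s,ε) := {θ ∈ ℝ^p : ‖θ‖₀ ≤ s and Σ_{k=1}^R ‖θ_{B_k} − θ̄_{B_k} 1_{B_k ∩ supp(θ)}‖² ≥ ε²/8}, and Υ_II(p,s,ε) := {θ ∈ ℝ^p : ‖θ‖₀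 ≤ s and Σ_{k : |B_k ∩ supp(θ)| > p/(4R)} ‖θ̄_{B_k} 1_{B_k}‖² ≥ ε²/8}. -/
/-!
Write `T_k = Σ_{i ∈ B_k} θ_i²`, `a_k = θ̄_{B_k}` and `m_k = |B_k ∩ supp θ|`. On each block
`θ_i² ≤ 2 (θ_i - a_k)² + 2 a_k²` on the support, so `T_k ≤ 2 r_k + 2 m_k a_k²`, where `r_k` is the
block's contribution to `Υ_I`. For a large block `m_k a_k² ≤ |B_k| a_k²` is its contribution to
`Υ_II`; for a small block (`m_k ≤ p/(4R)`) Cauchy–Schwarz over the support gives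
`m_k a_k² ≤ (R m_k / p)² T_k ≤ T_k / 16`. Summing, `(7/8) ‖θ‖² ≤ 2 (Υ_I + Υ_II)`, so one of the two
sums is at least `(7/32) ε² ≥ ε² / 8`.
-/

open Finset

section

variable {ι : Type*}

theorem sum_le_sum_sum_of_biUnion_eq_univ {κ M : Type*} [Fintype ι] [Fintype κ] [DecidableEq ι]
    [AddCommMonoid M] [PartialOrder M] [IsOrderedAddMonoid M]
    (B : κ → Finset ι) (hB : univ.biUnion B = univ) (f : ι → M) (hf : 0 ≤ f) :
    ∑ i, f i ≤ ∑ k, ∑ i ∈ B k, f i := by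
  have hmem : ∀ i, ∃ k, i ∈ B k := fun i => by simpa using hB.ge (mem_univ i)
  choose g hg using hmem
  classical
  calc ∑ i, f i = ∑ k, ∑ i with g i = k, f i := (sum_fiberwise univ g f).symm
    _ ≤ ∑ k, ∑ i ∈ B k, f i :=
      sum_le_sum fun k _ => sum_le_sum_of_subset_of_nonneg
        (fun i hi => (mem_filter.1 hi).2 ▸ hg i) fun i _ _ => hf i

theorem sum_sq_le_two_mul_sum_sq_sub_add (S : Finset ι) (θ : ι → ℝ) (a : ℝ) :
    ∑ i ∈ S, θ i ^ 2 ≤ 2 * ∑ i ∈ S, (θ i - a * if θ i ≠ 0 then 1 else 0) ^ 2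
      + 2 * #{i ∈ S | θ i ≠ 0} * a ^ 2 := by
  have hz : ∑ i ∈ S, (a * if θ i ≠ 0 then 1 else 0) ^ 2 = #{i ∈ S | θ i ≠ 0} * a ^ 2 := by
    simp [sum_ite]
  calc ∑ i ∈ S, θ i ^ 2
      ≤ ∑ i ∈ S, (2 * (θ i - a * if θ i ≠ 0 then 1 else 0) ^ 2
          + 2 * (a * if θ i ≠ 0 then 1 else 0) ^ 2) :=
        sum_le_sum fun i _ => by
          nlinarith [sq_nonneg (θ i - 2 * (a * if θ i ≠ 0 then 1 else 0))]
    _ = _ := by rw [sum_add_distrib, ← mul_sum, ← mul_sum, hz]; ring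

theorem card_support_mul_sq_le (S : Finset ι) (θ : ι → ℝ) {c : ℝ} (hc : 0 ≤ c)
    (h : c * #{i ∈ S | θ i ≠ 0} ≤ 1 / 4) :
    #{i ∈ S | θ i ≠ 0} * (c * ∑ i ∈ S, θ i) ^ 2 ≤ 1 / 16 * ∑ i ∈ S, θ i ^ 2 := by
  set m : ℝ := ((#{i ∈ S | θ i ≠ 0} : ℕ) : ℝ)
  have hcs : (∑ i ∈ S, θ i) ^ 2 ≤ m * ∑ i ∈ S, θ i ^ 2 := by
    rw [← sum_filter_ne_zero]
    exact sq_sum_le_card_mul_sum_sq.trans <| mul_le_mul_of_nonneg_left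
      (sum_le_sum_of_subset_of_nonneg (filter_subset _ _) fun i _ _ => sq_nonneg _)
      (by positivity)
  calc m * (c * ∑ i ∈ S, θ i) ^ 2 = c ^ 2 * m * (∑ i ∈ S, θ i) ^ 2 := by ring
    _ ≤ c ^ 2 * m * (m * ∑ i ∈ S, θ i ^ 2) := by gcongr
    _ = (c * m) ^ 2 * ∑ i ∈ S, θ i ^ 2 := by ring
    _ ≤ (1 / 4) ^ 2 * ∑ i ∈ S, θ i ^ 2 := by gcongr
    _ = 1 / 16 * ∑ i ∈ S, θ i ^ 2 := by norm_num

theorem seven_div_eight_mul_sum_sq_le {κ : Type*} [Fintype ι] [Fintype κ] [DecidableEq ι]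
    (B : κ → Finset ι) (hB : univ.biUnion B = univ) (θ : ι → ℝ) {c t : ℝ} (hc : 0 ≤ c)
    (hct : c * t ≤ 1 / 4) :
    7 / 8 * ∑ i, θ i ^ 2 ≤
      2 * ∑ k, ∑ i ∈ B k, (θ i - (c * ∑ j ∈ B k, θ j) * if θ i ≠ 0 then 1 else 0) ^ 2
        + 2 * ∑ k with t < #{i ∈ B k | θ i ≠ 0}, #(B k) * (c * ∑ i ∈ B k, θ i) ^ 2 := by
  set a : κ → ℝ := fun k => c * ∑ i ∈ B k, θ i
  set m : κ → ℝ := fun k => #{i ∈ B k | θ i ≠ 0}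
  set T : κ → ℝ := fun k => ∑ i ∈ B k, θ i ^ 2
  have hcover : ∑ i, θ i ^ 2 ≤ ∑ k, T k :=
    sum_le_sum_sum_of_biUnion_eq_univ B hB _ fun i => sq_nonneg (θ i)
  have hsplit := sum_filter_add_sum_filter_not univ (fun k => t < m k) fun k => m k * a k ^ 2
  have hlarge : ∑ k with t < m k, m k * a k ^ 2 ≤ ∑ k with t < m k, #(B k) * a k ^ 2 :=
    sum_le_sum fun k _ => by gcongr; exact Nat.cast_le.2 (card_filter_le _ _)
  have hsmall : ∑ k with ¬t < m k, m k * a k ^ 2 ≤ 1 / 16 * ∑ k, T k := by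
    rw [mul_sum]
    refine (sum_le_sum fun k hk => card_support_mul_sq_le (B k) θ hc ?_).trans
      (sum_le_sum_of_subset_of_nonneg (filter_subset _ _) fun k _ _ => by positivity)
    have hmt : m k ≤ t := not_lt.1 (mem_filter.1 hk).2
    exact (mul_le_mul_of_nonneg_left hmt hc).trans hct
  have hblocks : ∑ k, T k ≤ 2 * ∑ k, ∑ i ∈ B k,
      (θ i - a k * if θ i ≠ 0 then 1 else 0) ^ 2 + 2 * ∑ k, m k * a k ^ 2 := by
    rw [mul_sum, mul_sum, ← sum_add_distrib]
    exact sum_le_sum fun k _ => (sum_sq_le_two_mul_sum_sq_sub_add (B k) θ (a k)).trans_eq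
      (by ring)
  linarith

theorem sum_sq_ite_mem_sub [Fintype ι] [DecidableEq ι] (S : Finset ι) (θ : ι → ℝ) (a : ℝ) :
    ∑ i, ((if i ∈ S then θ i else 0) - a * if i ∈ S ∧ θ i ≠ 0 then 1 else 0) ^ 2
      = ∑ i ∈ S, (θ i - a * if θ i ≠ 0 then 1 else 0) ^ 2 :=
  (sum_subset (subset_univ S) fun i _ hi => by simp [hi]).symm.trans
    (sum_congr rfl fun i hi => by simp [hi])

theorem sum_sq_mul_ite_mem [Fintype ι] [DecidableEq ι] (S : Finset ι) (a : ℝ) :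
    ∑ i, (a * if i ∈ S then 1 else 0) ^ 2 = #S * a ^ 2 := by
  simp

end

theorem div_mul_div_four_mul_le (x y : ℝ) : x / y * (y / (4 * x)) ≤ 1 / 4 := by
  have h : x / y * (x / y)⁻¹ ≤ 1 := mul_inv_le_one
  rw [inv_div] at h
  linarith [show x / y * (y / (4 * x)) = x / y * (y / x) / 4 by ring]

theorem theta_subset_upsilon_union_general
    (p R s : ℕ)
    (B : Fin R → Finset (Fin p))
    (hcover : (Finset.univ : Finset (Fin R)).biUnion B = Finset.univ)
    (ε : ℝ) (hε : 0 < ε) :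
    -- `bar θ k` is the group average `θ̄_{B_k} = (R/p) Σ_{i ∈ B_k} θ_i`.
    (let bar : (Fin p → ℝ) → Fin R → ℝ := fun θ k => ((R : ℝ) / p) * ∑ i ∈ B k, θ i
    {θ : Fin p → ℝ | ε ≤ Real.sqrt (∑ i, θ i ^ 2) ∧ Set.ncard {i | θ i ≠ 0} ≤ s} ⊆
      -- Υ_I(p,s,ε)
      {θ : Fin p → ℝ | Set.ncard {i | θ i ≠ 0} ≤ s ∧
        ε ^ 2 / 8 ≤ ∑ k, ∑ i,
          ((if i ∈ B k then θ i else 0)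
            - bar θ k * (if i ∈ B k ∧ θ i ≠ 0 then 1 else 0)) ^ 2} ∪
      -- Υ_II(p,s,ε)
      {θ : Fin p → ℝ | Set.ncard {i | θ i ≠ 0} ≤ s ∧
        ε ^ 2 / 8 ≤
          ∑ k ∈ Finset.univ.filter
              (fun k => (p : ℝ) / (4 * R) < ((B k).filter (fun i => θ i ≠ 0)).card),
            ∑ i, (bar θ k * (if i ∈ B k then 1 else 0)) ^ 2}) := by
  intro bar θ ⟨hnorm, hsupp⟩
  have hε2 : ε ^ 2 ≤ ∑ i, θ i ^ 2 := (Real.le_sqrt' hε).1 hnorm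
  have key := seven_div_eight_mul_sum_sq_le B hcover θ (c := R / p) (by positivity)
    (div_mul_div_four_mul_le (R : ℝ) p)
  simp only [Set.mem_union, Set.mem_ofPred_eq, sum_sq_ite_mem_sub, sum_sq_mul_ite_mem, bar]
  rcases le_or_gt (ε ^ 2 / 8) (∑ k, ∑ i ∈ B k,
      (θ i - (R / p * ∑ j ∈ B k, θ j) * if θ i ≠ 0 then 1 else 0) ^ 2) with hI | hI
  · exact .inl ⟨hsupp, hI⟩
  · exact .inr ⟨hsupp, by linarith [sq_nonneg ε]⟩

theorem theta_subset_upsilon_union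
    (p R s : ℕ) (hp : 1 ≤ p) (hR : 1 ≤ R) (hs1 : 1 ≤ s) (hs2 : s ≤ p) (hdvd : R ∣ p)
    (B : Fin R → Finset (Fin p))
    (hdisj : ∀ k l, k ≠ l → Disjoint (B k) (B l))
    (hcard : ∀ k, (B k).card = p / R)
    (hcover : (Finset.univ : Finset (Fin R)).biUnion B = Finset.univ)
    (ε : ℝ) (hε : 0 < ε) :
    -- `bar θ k` is the group average `θ̄_{B_k} = (R/p) Σ_{i ∈ B_k} θ_i`.
    (let bar : (Fin p → ℝ) → Fin R → ℝ := fun θ k => ((R : ℝ) / p) * ∑ i ∈ B k, θ i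
    {θ : Fin p → ℝ | ε ≤ Real.sqrt (∑ i, θ i ^ 2) ∧ Set.ncard {i | θ i ≠ 0} ≤ s} ⊆
      -- Υ_I(p,s,ε)
      {θ : Fin p → ℝ | Set.ncard {i | θ i ≠ 0} ≤ s ∧
        ε ^ 2 / 8 ≤ ∑ k, ∑ i,
          ((if i ∈ B k then θ i else 0)
            - bar θ k * (if i ∈ B k ∧ θ i ≠ 0 then 1 else 0)) ^ 2} ∪
      -- Υ_II(p,s,ε)
      {θ : Fin p → ℝ | Set.ncard {i | θ i ≠ 0} ≤ s ∧
        ε ^ 2 / 8 ≤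
          ∑ k ∈ Finset.univ.filter
              (fun k => (p : ℝ) / (4 * R) < ((B k).filter (fun i => θ i ≠ 0)).card),
            ∑ i, (bar θ k * (if i ∈ B k then 1 else 0)) ^ 2}) :=
  theta_subset_upsilon_union_general p R s B hcover ε hε
end

section
/- Let p ≥ 1, let s be a natural number with 1 ≤ s ≤ p/2, let γ ∈ [0,1], and let ε > 0. Define P_{θ,γ} := N(θ, (1−γ)I_p + γ 1_p 1_pᵀ), Θ(p,s,ε) := {θ ∈ ℝ^p : ‖θ‖ ≥ ε and ‖θ‖₀ ≤ s}, Θ_I(p,s,ε) := {θ ∈ ℝ^p : ‖θ − θ̄ 1_p‖ ≥ ε and ‖θ‖₀ ≤ s} with θ̄ := p^{-1} Σ_{i=1}^p θ_i, and the risks R(ε) := inf_φ { P_{0,γ}(φ = 1) + sup_{θ ∈ Θ(p,s,ε)} P_{θ,γ}(φ = 0) } and R_I(ε) := inf_φ { P_{0,γ}(φ = 1) + sup_{θ ∈ Θ_I(p,s,ε)} P_{θ,γ}(φ = 0) }, where the infimum runs over all measurable φ : ℝ^p → {0,1}. Then R_I(ε) ≤ R(ε) ≤ R_I(ε/√2).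 -/
/-!
Both risks are infima of the same functional of the alternative, which is monotone in it because
all error probabilities lie in `[0, 1]`; so it suffices to compare the alternatives. Centering
only shrinks the Euclidean norm, whence `Θ_I(ε) ⊆ Θ(ε)`. Conversely
`‖θ‖² = ‖θ - θ̄ 1‖² + (∑ θᵢ)² / p`, and Cauchy–Schwarz on the support of an `s`-sparse `θ` gives
`(∑ θᵢ)² ≤ s ‖θ‖² ≤ (p / 2) ‖θ‖²`, so `‖θ‖² ≤ 2 ‖θ - θ̄ 1‖²` and `Θ(ε) ⊆ Θ_I(ε / √2)`.
-/

open MeasureTheory ProbabilityTheory Matrix Finset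
open scoped Classical

noncomputable section

/-- The standard Gaussian measure on `Fin p → ℝ`. -/
def stdGaussianPi (p : ℕ) : Measure (Fin p → ℝ) :=
  Measure.pi fun _ => gaussianReal 0 1

/-- The Gaussian measure `N(θ, S)` on `ℝ^p` with mean `θ` and positive semidefinite
covariance matrix `S`, realized as the pushforward of the standard Gaussian under
`x ↦ θ + √S x` (junk value `0` if `S` is not positive semidefinite). -/
def gaussianPi {p : ℕ} (θ : Fin p → ℝ) (S : Matrix (Fin p) (Fin p) ℝ) :
    Measure (Fin p → ℝ) :=
  if h : S.PosSemidef then (stdGaussianPi p).map (fun x => θ + ((h.1.eigenvectorUnitary : Matrix (Fin p) (Fin p) ℝ) *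
    diagonal (Real.sqrt ∘ h.1.eigenvalues) *
    (star (h.1.eigenvectorUnitary : Matrix (Fin p) (Fin p) ℝ))).mulVec x) else 0

/-- `‖θ‖₀`, the number of nonzero coordinates. -/
def sparsity {p : ℕ} (θ : Fin p → ℝ) : ℕ := Set.ncard {i | θ i ≠ 0}

/-- The Euclidean norm on `Fin p → ℝ`. -/
def l2norm {p : ℕ} (θ : Fin p → ℝ) : ℝ := Real.sqrt (∑ i, θ i ^ 2)

/-- Minimax testing risk: infimum over measurable tests `φ : ℝ^p → {0,1}` of the
type I error under `P 0` plus the worst-case type II error over the alternative `T`. -/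
def minimaxRisk {p : ℕ} (P : (Fin p → ℝ) → Measure (Fin p → ℝ))
    (T : Set (Fin p → ℝ)) : ℝ :=
  ⨅ φ : {f : (Fin p → ℝ) → Bool // Measurable f},
    ((P 0 {x | φ.1 x = true}).toReal + ⨆ θ ∈ T, (P θ {x | φ.1 x = false}).toReal)

instance gaussianPi.instIsZeroOrProbabilityMeasure {p : ℕ} (θ : Fin p → ℝ)
    (S : Matrix (Fin p) (Fin p) ℝ) : IsZeroOrProbabilityMeasure (gaussianPi θ S) := by
  unfold gaussianPi stdGaussianPi
  split_ifs <;> infer_instance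

/-- Nonnegativity is needed because `⨆` over an empty set of reals is `0`. -/
lemma Real.biSup_mono_of_nonneg {α : Type*} {g : α → ℝ} (hg₀ : 0 ≤ g)
    (hg : BddAbove (Set.range g)) {s t : Set α} (hst : s ⊆ t) : ⨆ a ∈ s, g a ≤ ⨆ a ∈ t, g a := by
  have hbdd : BddAbove (Set.range fun a => ⨆ _ : a ∈ t, g a) := by
    obtain ⟨C, hC⟩ := hg
    refine ⟨max C 0, Set.forall_mem_range.2 fun a => Real.iSup_le (fun _ => ?_) (le_max_right _ _)⟩
    exact (hC (Set.mem_range_self a)).trans (le_max_left _ _)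
  refine ciSup_mono hbdd fun a => Real.iSup_le (fun ha => ?_) (Real.iSup_nonneg fun _ => hg₀ a)
  rw [ciSup_pos (hst ha)]

lemma minimaxRisk_mono {p : ℕ} (P : (Fin p → ℝ) → Measure (Fin p → ℝ))
    [∀ θ, IsZeroOrProbabilityMeasure (P θ)] {T₁ T₂ : Set (Fin p → ℝ)} (h : T₁ ⊆ T₂) :
    minimaxRisk P T₁ ≤ minimaxRisk P T₂ := by
  refine ciInf_mono ⟨0, Set.forall_mem_range.2 fun φ => ?_⟩ fun φ => ?_
  · have : 0 ≤ ⨆ θ ∈ T₁, (P θ {x | φ.1 x = false}).toReal :=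
      Real.iSup_nonneg fun θ => Real.iSup_nonneg fun _ => ENNReal.toReal_nonneg
    positivity
  · refine add_le_add_right (Real.biSup_mono_of_nonneg
      (g := fun θ => (P θ {x | φ.1 x = false}).toReal) (fun θ => ENNReal.toReal_nonneg)
      ⟨1, Set.forall_mem_range.2 fun θ => measureReal_le_one⟩ h) _

lemma sum_sq_eq_sum_sq_sub_mean_add {ι : Type*} [Fintype ι] (θ : ι → ℝ) :
    ∑ i, θ i ^ 2 =
      ∑ i, (θ i - (∑ j, θ j) / Fintype.card ι) ^ 2 + (∑ i, θ i) ^ 2 / Fintype.card ι := by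
  rcases isEmpty_or_nonempty ι with hι | hι
  · simp
  have hcard : (Fintype.card ι : ℝ) ≠ 0 := by positivity
  simp only [sub_sq, Finset.sum_add_distrib, Finset.sum_sub_distrib, ← Finset.sum_mul,
    ← Finset.mul_sum, Finset.sum_const, Finset.card_univ, nsmul_eq_mul]
  field_simp
  ring

lemma sq_sum_le_sparsity_mul_sum_sq {p : ℕ} (θ : Fin p → ℝ) :
    (∑ i, θ i) ^ 2 ≤ sparsity θ * ∑ i, θ i ^ 2 := by
  have hsupp : sparsity θ = #{i | θ i ≠ 0} := by
    rw [sparsity, ← Set.ncard_coe_finset, Finset.coe_filter]; simp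
  calc (∑ i, θ i) ^ 2 = (∑ i with θ i ≠ 0, θ i) ^ 2 := by rw [Finset.sum_filter_ne_zero]
    _ ≤ #{i | θ i ≠ 0} * ∑ i with θ i ≠ 0, θ i ^ 2 := sq_sum_le_card_mul_sum_sq
    _ ≤ sparsity θ * ∑ i, θ i ^ 2 := by
      rw [hsupp]
      gcongr
      exact Finset.filter_subset _ _

lemma l2norm_sub_mean_le {p : ℕ} (θ : Fin p → ℝ) :
    l2norm (fun i => θ i - (∑ j, θ j) / p) ≤ l2norm θ := by
  refine Real.sqrt_le_sqrt ?_
  have hsplit := sum_sq_eq_sum_sq_sub_mean_add θ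
  simp only [Fintype.card_fin] at hsplit
  rw [hsplit]
  exact le_add_of_nonneg_right (by positivity)

lemma l2norm_le_sqrt_two_mul_l2norm_sub_mean {p : ℕ} (θ : Fin p → ℝ)
    (h : (sparsity θ : ℝ) ≤ p / 2) :
    l2norm θ ≤ √2 * l2norm (fun i => θ i - (∑ j, θ j) / p) := by
  have hsplit := sum_sq_eq_sum_sq_sub_mean_add θ
  simp only [Fintype.card_fin] at hsplit
  have hmean : (∑ i, θ i) ^ 2 / p ≤ (∑ i, θ i ^ 2) / 2 := by
    rcases (Nat.cast_nonneg p : (0 : ℝ) ≤ p).eq_or_lt with hp | hp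
    · rw [← hp, div_zero]; positivity
    rw [div_le_iff₀ hp]
    calc (∑ i, θ i) ^ 2 ≤ sparsity θ * ∑ i, θ i ^ 2 := sq_sum_le_sparsity_mul_sum_sq θ
      _ ≤ p / 2 * ∑ i, θ i ^ 2 := by gcongr
      _ = (∑ i, θ i ^ 2) / 2 * p := by ring
  rw [l2norm, l2norm, ← Real.sqrt_mul zero_le_two]
  exact Real.sqrt_le_sqrt (by linarith)

theorem problem_decomposition_problemI_equiv_general
    (p s : ℕ) (hs2 : (s : ℝ) ≤ (p : ℝ) / 2)
    (γ : ℝ) (ε : ℝ) :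
    (let P : (Fin p → ℝ) → Measure (Fin p → ℝ) := fun θ =>
      gaussianPi θ ((1 - γ) • (1 : Matrix (Fin p) (Fin p) ℝ) + γ • Matrix.of fun _ _ => (1 : ℝ))
    let Θ : ℝ → Set (Fin p → ℝ) := fun e =>
      {θ | e ≤ l2norm θ ∧ sparsity θ ≤ s}
    let ΘI : ℝ → Set (Fin p → ℝ) := fun e =>
      {θ | e ≤ l2norm (fun i => θ i - (∑ j, θ j) / p) ∧ sparsity θ ≤ s}
    minimaxRisk P (ΘI ε) ≤ minimaxRisk P (Θ ε) ∧
      minimaxRisk P (Θ ε) ≤ minimaxRisk P (ΘI (ε / Real.sqrt 2))) := by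
  intro P Θ ΘI
  constructor
  · exact minimaxRisk_mono P fun θ ⟨hε, hs⟩ => ⟨hε.trans (l2norm_sub_mean_le θ), hs⟩
  · refine minimaxRisk_mono P fun θ ⟨hε, hs⟩ => ⟨?_, hs⟩
    rw [div_le_iff₀' (by positivity)]
    exact hε.trans (l2norm_le_sqrt_two_mul_l2norm_sub_mean θ ((Nat.cast_le.2 hs).trans hs2))

theorem problem_decomposition_problemI_equiv
    (p s : ℕ) (hp : 1 ≤ p) (hs1 : 1 ≤ s) (hs2 : (s : ℝ) ≤ (p : ℝ) / 2)
    (γ : ℝ) (hγ0 : 0 ≤ γ) (hγ1 : γ ≤ 1) (ε : ℝ) (hε : 0 < ε) :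
    (let P : (Fin p → ℝ) → Measure (Fin p → ℝ) := fun θ =>
      gaussianPi θ ((1 - γ) • (1 : Matrix (Fin p) (Fin p) ℝ) + γ • Matrix.of fun _ _ => (1 : ℝ))
    let Θ : ℝ → Set (Fin p → ℝ) := fun e =>
      {θ | e ≤ l2norm θ ∧ sparsity θ ≤ s}
    let ΘI : ℝ → Set (Fin p → ℝ) := fun e =>
      {θ | e ≤ l2norm (fun i => θ i - (∑ j, θ j) / p) ∧ sparsity θ ≤ s}
    minimaxRisk P (ΘI ε) ≤ minimaxRisk P (Θ ε) ∧
      minimaxRisk P (Θ ε) ≤ minimaxRisk P (ΘI (ε / Real.sqrt 2))) :=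
  problem_decomposition_problemI_equiv_general p s hs2 γ ε

end
end
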